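/- If p : E → B is an arc-hedgehog covering, then p is a disk-hedgehog covering if and only if p is a disk-covering (i.e., maps from the 2-disk lift uniquely). -/

import Mathlib

open unitInterval Topology

set_option linter.unnecessarySimpa false

universe u v w

/-- `p : E → B` is an arc-covering: unique lifting of paths given the initial point. -/
def IsArcCovering {E : Type*} {B : Type*} [TopologicalSpace E] [TopologicalSpace B]
    (p : C(E, B)) : Prop :=
  ∀ (e₀ : E) (f : C(I, B)), f 0 = p e₀ →
    ∃! g : C(I, E), p.comp g = f ∧ g 0 = e₀

/-- The relation identifying the wedge points of a wedge of copies of `(A, a₀)` indexed by `S`. -/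
def wedgeRel (S A : Type*) (a₀ : A) (x y : S × A) : Prop :=
  x = y ∨ (x.2 = a₀ ∧ y.2 = a₀)

/-- The wedge (one-point union) of copies of `(A, a₀)` indexed by `S`. -/
def Wedge (S A : Type*) (a₀ : A) : Type _ :=
  Quot (wedgeRel S A a₀)

/-- The topology of a directed wedge: a set is open iff its trace on each copy of `A`
is open, and if it contains the wedge point then it contains all copies of `A`
beyond some index. -/
instance Wedge.instTopologicalSpace (S A : Type*) (a₀ : A) [Preorder S]
    [IsDirected S (· ≤ ·)] [TopologicalSpace A] : TopologicalSpace (Wedge S A a₀) where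
  IsOpen U := (∀ s : S, IsOpen {a : A | Quot.mk (wedgeRel S A a₀) (s, a) ∈ U}) ∧
    ((∃ s : S, Quot.mk (wedgeRel S A a₀) (s, a₀) ∈ U) →
      ∃ t : S, ∀ s : S, t < s → ∀ a : A, Quot.mk (wedgeRel S A a₀) (s, a) ∈ U)
  isOpen_univ := by
    refine ⟨fun s => ?_, fun h => ?_⟩
    · convert (isOpen_univ (X := A)) using 1
      exact Set.eq_univ_of_forall fun _ => trivial
    · obtain ⟨s, -⟩ := h
      exact ⟨s, fun _ _ _ => trivial⟩
  isOpen_inter := by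
    rintro U V ⟨hU1, hU2⟩ ⟨hV1, hV2⟩
    refine ⟨fun s => (hU1 s).inter (hV1 s), fun h => ?_⟩
    obtain ⟨tU, htU⟩ := hU2 ⟨h.choose, h.choose_spec.1⟩
    obtain ⟨tV, htV⟩ := hV2 ⟨h.choose, h.choose_spec.2⟩
    obtain ⟨t, ht1, ht2⟩ := directed_of (· ≤ ·) tU tV
    exact ⟨t, fun s hs a => ⟨htU s (lt_of_le_of_lt ht1 hs) a, htV s (lt_of_le_of_lt ht2 hs) a⟩⟩
  isOpen_sUnion := by
    intro C hC
    constructor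
    · intro s
      have : {a : A | Quot.mk (wedgeRel S A a₀) (s, a) ∈ ⋃₀ C} =
          ⋃ U ∈ C, {a : A | Quot.mk (wedgeRel S A a₀) (s, a) ∈ U} := by
        ext a
        simp only [Set.mem_setOf_eq, Set.mem_sUnion, Set.mem_iUnion, exists_prop]
        exact Iff.rfl
      rw [this]
      exact isOpen_biUnion fun U hU => (hC U hU).1 s
    · rintro ⟨s, hs⟩
      obtain ⟨U, hUC, hsU⟩ := hs
      obtain ⟨t, ht⟩ := (hC U hUC).2 ⟨s, hsU⟩
      exact ⟨t, fun s' hs' a => ⟨U, hUC, ht s' hs' a⟩⟩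

/-- An arc-hedgehog over a directed set `S`: the directed wedge of copies of `([0,1], 0)`. -/
def ArcHedgehog (S : Type*) : Type _ := Wedge S I 0

instance (S : Type*) [Preorder S] [IsDirected S (· ≤ ·)] : TopologicalSpace (ArcHedgehog S) :=
  Wedge.instTopologicalSpace S I 0

/-- `p` is an arc-hedgehog covering: maps from arc-hedgehogs lift uniquely. -/
def IsArcHedgehogCovering {E : Type*} {B : Type*} [TopologicalSpace E] [TopologicalSpace B]
    (p : C(E, B)) : Prop :=
  ∀ (S : Type u) [Preorder S] [IsDirected S (· ≤ ·)],
    ∀ (e₀ : E) (f : C(ArcHedgehog S, B)) (z₀ : ArcHedgehog S), f z₀ = p e₀ →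
      ∃! g : C(ArcHedgehog S, E), p.comp g = f ∧ g z₀ = e₀

/-- The closed unit `2`-disk. -/
noncomputable def Disk : Type := Metric.closedBall (0 : EuclideanSpace ℝ (Fin 2)) 1

noncomputable instance : TopologicalSpace Disk := by unfold Disk; infer_instance

/-- The center of the disk. -/
noncomputable def Disk.center : Disk := ⟨0, by simp⟩

/-- A disk-hedgehog over a directed set `S`: the directed wedge of copies of the pointed disk. -/
def DiskHedgehog (S : Type*) : Type _ := Wedge S Disk Disk.center

noncomputable instance (S : Type*) [Preorder S] [IsDirected S (· ≤ ·)] : TopologicalSpace (DiskHedgehog S) :=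
  Wedge.instTopologicalSpace S Disk Disk.center

/-- `p` is a disk-hedgehog covering: maps from disk-hedgehogs lift uniquely. -/
def IsDiskHedgehogCovering {E : Type*} {B : Type*} [TopologicalSpace E] [TopologicalSpace B]
    (p : C(E, B)) : Prop :=
  ∀ (S : Type u) [Preorder S] [IsDirected S (· ≤ ·)],
    ∀ (e₀ : E) (f : C(DiskHedgehog S, B)) (z₀ : DiskHedgehog S), f z₀ = p e₀ →
      ∃! g : C(DiskHedgehog S, E), p.comp g = f ∧ g z₀ = e₀

/-- `p` is a disk-covering: maps from the closed `2`-disk lift uniquely. -/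
def IsDiskCovering {E : Type*} {B : Type*} [TopologicalSpace E] [TopologicalSpace B]
    (p : C(E, B)) : Prop :=
  ∀ (e₀ : E) (f : C(Disk, B)) (d₀ : Disk), f d₀ = p e₀ →
    ∃! g : C(Disk, E), p.comp g = f ∧ g d₀ = e₀

/-- Path components of preimages of neighborhoods form a neighborhood basis of the
total space. -/
def HedgehogBasisCondition {E : Type*} {B : Type*} [TopologicalSpace E] [TopologicalSpace B]
    (p : C(E, B)) : Prop :=
  ∀ (e₀ : E) (U : Set E), IsOpen U → e₀ ∈ U →
    ∃ V ∈ 𝓝 (p e₀), {y : E | JoinedIn (p ⁻¹' V) e₀ y} ⊆ U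

/-- The monodromy relation on loops at `b₀`: two loops are identified iff any two of
their lifts starting at the same point end at the same point. -/
def MonodromyRel {E : Type*} {B : Type*} [TopologicalSpace E] [TopologicalSpace B]
    (p : C(E, B)) (b₀ : B) (α β : Path b₀ b₀) : Prop :=
  ∀ g h : C(I, E), (∀ t, p (g t) = α t) → (∀ t, p (h t) = β t) →
    g 0 = h 0 → g 1 = h 1

/-- `p` is regular: for each loop in `B`, all lifts are loops or all lifts are non-loops. -/
def IsRegularCovering {E : Type*} {B : Type*} [TopologicalSpace E] [TopologicalSpace B]
    (p : C(E, B)) : Prop :=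
  ∀ (b : B) (α : Path b b) (g h : C(I, E)),
    (∀ t, p (g t) = α t) → (∀ t, p (h t) = α t) → g 0 = g 1 → h 0 = h 1

/-!
Let `f` be a map from a disk-hedgehog to `B` and lift the disk of index `s` through a fixed
point `e` over the wedge point; these lifts glue to a lift of `f`, and the only issue is
continuity at the wedge point, i.e. that for an open `U ∋ e` the lifts of all disks beyond
some index lie in `U`. If not, pick in each offending disk a point mapped outside `U` and join
it to the center by an arc: this is a map from an arc-hedgehog, whose (continuous) lift
restricts to the lift of each arc and hence sends arcs beyond some index into `U`, which is
a contradiction. Basepoints other than the wedge point, and uniqueness, are handled by unique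
path lifting, as the disk-hedgehog is path-connected.
-/

namespace Wedge

variable {S A X : Type*} [Preorder S] [IsDirected S (· ≤ ·)] [TopologicalSpace A] {a₀ : A}

theorem isOpen_iff {U : Set (Wedge S A a₀)} :
    IsOpen U ↔ (∀ s : S, IsOpen {a : A | Quot.mk (wedgeRel S A a₀) (s, a) ∈ U}) ∧
      ((∃ s : S, Quot.mk (wedgeRel S A a₀) (s, a₀) ∈ U) →
        ∃ t : S, ∀ s : S, t < s → ∀ a : A, Quot.mk (wedgeRel S A a₀) (s, a) ∈ U) :=
  Iff.rfl

variable (a₀) in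
def ι (s : S) : C(A, Wedge S A a₀) :=
  ⟨fun a => Quot.mk _ (s, a), continuous_def.mpr fun _ hU => (isOpen_iff.mp hU).1 s⟩

theorem ι_basepoint (s s' : S) : ι a₀ s a₀ = ι a₀ s' a₀ :=
  Quot.sound (Or.inr ⟨rfl, rfl⟩)

theorem exists_forall_ι_mem_of_isOpen {U : Set (Wedge S A a₀)} (hU : IsOpen U) {s₀ : S}
    (h : ι a₀ s₀ a₀ ∈ U) : ∃ t : S, ∀ s, t < s → ∀ a, ι a₀ s a ∈ U :=
  (isOpen_iff.mp hU).2 ⟨s₀, h⟩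

theorem continuous_of [TopologicalSpace X] {g : Wedge S A a₀ → X}
    (hι : ∀ s, Continuous (g ∘ ι a₀ s))
    (hbase : ∀ s₀ (U : Set X), IsOpen U → g (ι a₀ s₀ a₀) ∈ U →
      ∃ t : S, ∀ s, t < s → ∀ a, g (ι a₀ s a) ∈ U) :
    Continuous g :=
  continuous_def.mpr fun U hU =>
    ⟨fun s => (hι s).isOpen_preimage U hU, fun ⟨s₀, hs₀⟩ => hbase s₀ U hU hs₀⟩

theorem hom_ext [TopologicalSpace X] {g g' : C(Wedge S A a₀, X)}
    (h : ∀ s, g.comp (ι a₀ s) = g'.comp (ι a₀ s)) : g = g' := by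
  ext x
  induction x using Quot.ind with
  | _ x => exact ContinuousMap.congr_fun (h x.1) x.2

def map {A' : Type*} [TopologicalSpace A'] {a₀' : A'} (φ : S → C(A', A))
    (hφ : ∀ s, φ s a₀' = a₀) : C(Wedge S A' a₀', Wedge S A a₀) where
  toFun := Quot.lift (fun x => ι a₀ x.1 (φ x.1 x.2)) <| by
    rintro ⟨s, a⟩ ⟨s', a'⟩ (h | ⟨rfl, rfl⟩)
    · rw [h]
    · simp only [hφ, ι_basepoint s s']
  continuous_toFun := continuous_of (fun s => ((ι a₀ s).comp (φ s)).continuous)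
    fun s₀ _ hU h => by
      obtain ⟨t, ht⟩ :=
        exists_forall_ι_mem_of_isOpen hU (s₀ := s₀) (congrArg (ι a₀ s₀) (hφ s₀) ▸ h)
      exact ⟨t, fun s hs a => ht s hs (φ s a)⟩

def glue (g : S → A → X) (hg : ∀ s s', g s a₀ = g s' a₀) : Wedge S A a₀ → X :=
  Quot.lift (fun x => g x.1 x.2) <| by
    rintro ⟨s, a⟩ ⟨s', a'⟩ (h | ⟨rfl, rfl⟩)
    · rw [h]
    · exact hg s s'

theorem glue_ι (g : S → A → X) (hg : ∀ s s', g s a₀ = g s' a₀) (s : S) (a : A) :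
    glue g hg (ι a₀ s a) = g s a :=
  rfl

instance [Nonempty S] [PathConnectedSpace A] : PathConnectedSpace (Wedge S A a₀) := by
  obtain ⟨s₀⟩ := ‹Nonempty S›
  have joined_base : ∀ x : Wedge S A a₀, Joined (ι a₀ s₀ a₀) x := by
    rintro ⟨s, a⟩
    rw [ι_basepoint s₀ s]
    exact (PathConnectedSpace.joined a₀ a).map (ι a₀ s).continuous
  exact ⟨⟨ι a₀ s₀ a₀⟩, fun x y => (joined_base x).symm.trans (joined_base y)⟩

variable (A a₀) in
def punitHomeomorph : Wedge PUnit.{v + 1} A a₀ ≃ₜ A where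
  toFun := glue (fun _ a => a) fun _ _ => rfl
  invFun := ι a₀ (PUnit.unit : PUnit.{v + 1})
  left_inv := by
    rintro ⟨⟨⟩, a⟩
    rfl
  right_inv _ := rfl
  continuous_toFun := continuous_of (fun _ => continuous_id)
    fun _ _ _ _ => ⟨PUnit.unit, fun s hs => absurd hs (lt_irrefl s)⟩
  continuous_invFun := (ι a₀ (PUnit.unit : PUnit.{v + 1})).continuous

end Wedge

instance : PathConnectedSpace I :=
  isPathConnected_iff_pathConnectedSpace.mp ((convex_Icc 0 1).isPathConnected ⟨0, by simp⟩)

instance : PathConnectedSpace Disk :=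
  isPathConnected_iff_pathConnectedSpace.mp
    ((convex_closedBall (0 : EuclideanSpace ℝ (Fin 2)) 1).isPathConnected ⟨0, by simp⟩)

section Lifting

variable {E B X Y : Type*} [TopologicalSpace E] [TopologicalSpace B] [TopologicalSpace X]
  [TopologicalSpace Y] {p : C(E, B)}

theorem existsUnique_lift_of_homeomorph (φ : X ≃ₜ Y) {f : C(Y, B)} {y₀ : Y}
    {e₀ : E} (h : ∃! g : C(X, E), p.comp g = f.comp φ ∧ g (φ.symm y₀) = e₀) :
    ∃! g : C(Y, E), p.comp g = f ∧ g y₀ = e₀ := by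
  obtain ⟨g, ⟨hg, hg₀⟩, hg_unique⟩ := h
  refine ⟨g.comp φ.symm, ⟨?_, hg₀⟩, fun g' ⟨hg', hg'₀⟩ => ?_⟩
  · ext y
    simpa using ContinuousMap.congr_fun hg (φ.symm y)
  · have : g'.comp φ = g := hg_unique _
      ⟨by ext x; simpa using ContinuousMap.congr_fun hg' (φ x), by simpa using hg'₀⟩
    ext y
    simpa using ContinuousMap.congr_fun this (φ.symm y)

theorem IsArcCovering.ext [PathConnectedSpace X] (hp : IsArcCovering p) {g g' : C(X, E)}
    (h : p.comp g = p.comp g') {x₀ : X} (h₀ : g x₀ = g' x₀) : g = g' := by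
  ext x
  let γ : C(I, X) := PathConnectedSpace.somePath x₀ x
  have : g.comp γ = g'.comp γ :=
    (hp (g x₀) ((p.comp g).comp γ) (by simp [γ])).unique ⟨rfl, by simp [γ]⟩
      ⟨by rw [h]; rfl, by simp [γ, h₀]⟩
  simpa [γ] using ContinuousMap.congr_fun this 1

/-- A lift through one basepoint is transported to any other one along a path. -/
theorem IsArcCovering.existsUnique_lift [PathConnectedSpace X] (hp : IsArcCovering p)
    {f : C(X, B)} (x₁ : X)
    (hlift : ∀ e₁, p e₁ = f x₁ → ∃ g : C(X, E), p.comp g = f ∧ g x₁ = e₁)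
    {x₀ : X} {e₀ : E} (h₀ : f x₀ = p e₀) :
    ∃! g : C(X, E), p.comp g = f ∧ g x₀ = e₀ := by
  let γ : C(I, X) := PathConnectedSpace.somePath x₀ x₁
  obtain ⟨β, ⟨hβ, hβ₀⟩, -⟩ := hp e₀ (f.comp γ) (by simpa [γ] using h₀)
  obtain ⟨g, hg, hg₁⟩ := hlift (β 1) (by simpa [γ] using ContinuousMap.congr_fun hβ 1)
  have hgγ : g.comp γ = β := hp.ext (by rw [hβ, ← ContinuousMap.comp_assoc, hg]) (x₀ := 1)
    (by simpa [γ] using hg₁)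
  have hg₀ : g x₀ = e₀ := by simpa [γ, hβ₀] using ContinuousMap.congr_fun hgγ 0
  exact ⟨g, ⟨hg, hg₀⟩, fun g' ⟨hg', hg'₀⟩ =>
    hp.ext (hg'.trans hg.symm) (hg'₀.trans hg₀.symm)⟩

end Lifting

section Hedgehog

variable {E B : Type u} [TopologicalSpace E] [TopologicalSpace B] {p : C(E, B)}
  {S : Type u} [Preorder S] [IsDirected S (· ≤ ·)]
  {A : Type*} [TopologicalSpace A] [PathConnectedSpace A] {a₀ : A}

theorem IsArcHedgehogCovering.isArcCovering (hp : IsArcHedgehogCovering.{u} p) :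
    IsArcCovering p := fun e₀ f hf =>
  let φ : ArcHedgehog PUnit.{u + 1} ≃ₜ I := Wedge.punitHomeomorph I 0
  existsUnique_lift_of_homeomorph φ (hp PUnit e₀ (f.comp φ) (φ.symm 0) hf)

theorem IsDiskHedgehogCovering.isDiskCovering (hp : IsDiskHedgehogCovering.{u} p) :
    IsDiskCovering p := fun e₀ f d₀ hf =>
  let φ : DiskHedgehog PUnit.{u + 1} ≃ₜ Disk := Wedge.punitHomeomorph Disk Disk.center
  existsUnique_lift_of_homeomorph φ (hp PUnit e₀ (f.comp φ) (φ.symm d₀) hf)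

theorem IsArcHedgehogCovering.exists_forall_mem_of_lifts (hp : IsArcHedgehogCovering.{u} p)
    (f : C(Wedge S A a₀, B)) {e : E} (g : S → C(A, E))
    (hg : ∀ s, p.comp (g s) = f.comp (Wedge.ι a₀ s)) (hg₀ : ∀ s, g s a₀ = e)
    {U : Set E} (hU : IsOpen U) (he : e ∈ U) (s₀ : S) :
    ∃ t : S, ∀ s, t < s → ∀ a, g s a ∈ U := by
  -- In each summand whose lift leaves `U`, a point where it does, joined to `a₀` by an arc.
  let a : S → A := fun s => Classical.epsilon fun a => g s a ∉ U
  let γ : S → C(I, A) := fun s => PathConnectedSpace.somePath a₀ (a s)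
  have hγ₀ : ∀ s, γ s 0 = a₀ := by simp [γ]
  let Φ : C(Wedge S I 0, Wedge S A a₀) := Wedge.map γ hγ₀
  have hΦ : ∀ s r, Φ (Wedge.ι 0 s r) = Wedge.ι a₀ s (γ s r) := fun _ _ => rfl
  have hpg : ∀ s a, p (g s a) = f (Wedge.ι a₀ s a) := fun s => ContinuousMap.congr_fun (hg s)
  obtain ⟨h, ⟨hh, hh₀⟩, -⟩ :
      ∃! h : C(Wedge S I 0, E), p.comp h = f.comp Φ ∧ h (Wedge.ι 0 s₀ 0) = e :=
    hp S e (f.comp Φ) (Wedge.ι 0 s₀ 0) <| by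
      show f (Φ (Wedge.ι 0 s₀ 0)) = p e
      rw [hΦ, hγ₀, ← hpg, hg₀]
  have h_spoke : ∀ s, h.comp (Wedge.ι 0 s) = (g s).comp (γ s) := fun s =>
    hp.isArcCovering.ext (x₀ := 0)
      (by ext r; exact (ContinuousMap.congr_fun hh _).trans (hpg s (γ s r)).symm)
      (by simp only [ContinuousMap.comp_apply, Wedge.ι_basepoint s s₀, hh₀, hγ₀, hg₀])
  obtain ⟨t, ht⟩ := Wedge.exists_forall_ι_mem_of_isOpen (hU.preimage h.continuous)
    (s₀ := s₀) (by simpa [hh₀] using he)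
  refine ⟨t, fun s hs b => by_contra fun hb => ?_⟩
  have h_out : g s (a s) ∉ U := Classical.epsilon_spec (p := fun a => g s a ∉ U) ⟨b, hb⟩
  have h_end : h (Wedge.ι 0 s 1) = g s (a s) := by
    simpa [γ] using ContinuousMap.congr_fun (h_spoke s) 1
  exact h_out (h_end ▸ ht s hs 1)

theorem IsArcHedgehogCovering.exists_lift_wedge (hp : IsArcHedgehogCovering.{u} p)
    (f : C(Wedge S A a₀, B)) {e : E}
    (hlift : ∀ s, ∃ g : C(A, E), p.comp g = f.comp (Wedge.ι a₀ s) ∧ g a₀ = e) :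
    ∃ G : C(Wedge S A a₀, E), p.comp G = f ∧ ∀ s, G (Wedge.ι a₀ s a₀) = e := by
  choose g hg hg₀ using hlift
  let G : C(Wedge S A a₀, E) :=
    { toFun := Wedge.glue (fun s => g s) fun s s' => (hg₀ s).trans (hg₀ s').symm
      continuous_toFun := Wedge.continuous_of (fun s => (g s).continuous)
        fun s₀ _ hU hmem => hp.exists_forall_mem_of_lifts f g hg hg₀ hU
          (by simpa [Wedge.glue_ι, hg₀] using hmem) s₀ }
  exact ⟨G, Wedge.hom_ext fun s => hg s, hg₀⟩

end Hedgehog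

/-- an arc-hedgehog covering is a disk-hedgehog covering iff it is a
disk-covering. -/
theorem diskHedgehog_iff_disk {E B : Type u} [TopologicalSpace E] [TopologicalSpace B]
    (p : C(E, B)) (hp : IsArcHedgehogCovering.{u} p) :
    IsDiskHedgehogCovering.{u} p ↔ IsDiskCovering p := by
  refine ⟨IsDiskHedgehogCovering.isDiskCovering, fun hd S _ _ e₀ f z₀ hz₀ => ?_⟩
  obtain ⟨⟨s₀, -⟩, -⟩ := Quot.exists_rep z₀
  have : Nonempty S := ⟨s₀⟩
  refine hp.isArcCovering.existsUnique_lift (Wedge.ι Disk.center s₀ Disk.center)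
    (fun e he => ?_) hz₀
  obtain ⟨G, hG, hG₀⟩ := hp.exists_lift_wedge f fun s =>
    (hd e (f.comp (Wedge.ι Disk.center s)) Disk.center
      (show f (Wedge.ι _ s _) = p e by rw [Wedge.ι_basepoint s s₀]; exact he.symm)).exists
  exact ⟨G, hG, hG₀ s₀⟩
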